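/- For all rational numbers m, q with q ≠ 0, setting h = (m^2 + (m^2 + q^2)^2)/q, A = m + m^2 + q^2, B = m - q, C = m - m^2 - q^2, D = m + q, one has A^4 + h*B^4 = C^4 + h*D^4. -/
import Mathlib

theorem stmt_16 (m q : ℚ) (hq : q ≠ 0)
    (h A B C D : ℚ)
    (hh : h = (m^2 + (m^2 + q^2)^2)/q)
    (hA : A = m + m^2 + q^2) (hB : B = m - q)
    (hC : C = m - m^2 - q^2) (hD : D = m + q) :
    A^4 + h*B^4 = C^4 + h*D^4 := by
  subst hh hA hB hC hD
  field_simp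
  ring
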